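/- arXiv:2206.03481 — 2 statements merged into one kernel-verified Lean document; each statement's English description precedes it below -/
import Mathlib

section
/- Let $F$ be a field, let $S \subseteq F$ be a finite set of pairwise distinct nonzero points, and let $f, h \in F[X]$ be polynomials with $\deg f < |S|$, $\deg h < |S|$, and $h(0) = 0$. For each $x \in S$ let $\lambda_x = \prod_{y \in S, y \neq x} \frac{y}{y - x}$. Then the updated shares $f(x) + h(x)$ reconstruct the original secret: $\sum_{x \in S} \lambda_x \,( f(x) + h(x) ) = f(0)$. (Correctness of ICE-FROST's share-update procedure: participants secretly share the value $0$ and add the resulting shares to their previous shares, randomizing the shares without changing the shared secret, so that the group's static public key remains valid.) -/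
open Finset Polynomial

lemma reconstruct_aux {F : Type*} [Field F] [DecidableEq F]
    (S : Finset F) (g : Polynomial F) (hdeg : g.degree < (S.card : ℕ)) :
    ∑ x ∈ S, (∏ y ∈ S.erase x, y / (y - x)) * g.eval x = g.eval 0 := by
  have hinj : Set.InjOn (id : F → F) S := fun a _ b _ h => h
  have hg := Lagrange.eq_interpolate (v := id) hinj hdeg
  conv_rhs => rw [hg]
  rw [Lagrange.interpolate_apply, eval_finset_sum]
  refine Finset.sum_congr rfl fun x hx => ?_
  rw [eval_mul, eval_C, mul_comm]
  congr 1
  rw [Lagrange.basis, eval_prod]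
  refine Finset.prod_congr rfl fun y hy => ?_
  simp only [Lagrange.basisDivisor, eval_mul, eval_C, eval_sub, eval_X, id]
  rw [zero_sub, mul_neg, ← neg_mul, ← inv_neg, neg_sub, inv_mul_eq_div]

/-- Correctness of ICE-FROST's share-update procedure: adding shares of a
polynomial `h` with `h(0) = 0` to the shares of `f` does not change the
reconstructed secret `f(0)`. -/
theorem share_update_reconstruction {F : Type*} [Field F] [DecidableEq F]
    (S : Finset F) (h0 : ∀ x ∈ S, x ≠ (0 : F))
    (f h : Polynomial F)
    (hdegf : f.degree < (S.card : ℕ)) (hdegh : h.degree < (S.card : ℕ))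
    (hzero : h.eval 0 = 0) :
    ∑ x ∈ S, (∏ y ∈ S.erase x, y / (y - x)) * (f.eval x + h.eval x) = f.eval 0 := by
  simp_rw [mul_add, Finset.sum_add_distrib]
  rw [reconstruct_aux S f hdegf, reconstruct_aux S h hdegh, hzero, add_zero]
end

section
/- Let $R$ be an integral domain, let $w_1, \dots, w_n \in R$ be pairwise distinct, let $a_1, \dots, a_n \in R$, and let $\sigma$ be a permutation of $\{1, \dots, n\}$. If $\prod_{i=1}^{n} (a_i + \alpha\, w_i + \gamma) = \prod_{i=1}^{n} (a_i + \alpha\, w_{\sigma(i)} + \gamma)$ holds as an identity of polynomials in the two indeterminates $\alpha, \gamma$ over $R$, then $a_i = a_{\sigma(i)}$ for all $i = 1, \dots, n$. (Soundness of the copy-constraint check in Randomized AIR with Preprocessing: for a known permutation $\sigma$ and randomly drawn $\alpha, \gamma$, the check $\prod_{i=1}^n (a_i + \alpha \omega^i + \gamma) = \prod_{i=1}^n (a_i + \alpha \omega^{\sigma(i)} + \gamma)$ indicates that $a_i = a_{\sigma(i)}$ for all $i$.) -/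
open MvPolynomial

/-- Soundness of the copy-constraint check in RAPs: for pairwise distinct
`w_i` and a permutation `σ`, if
`∏ (a_i + α·w_i + γ) = ∏ (a_i + α·w_{σ(i)} + γ)` holds as a polynomial
identity in the indeterminates `α := X 0` and `γ := X 1` over an integral
domain, then `a_i = a_{σ(i)}` for all `i`. -/
theorem rap_copy_constraint_soundness {R : Type*} [CommRing R] [IsDomain R]
    (n : ℕ) (w a : Fin n → R) (hw : Function.Injective w)
    (σ : Equiv.Perm (Fin n))
    (h : ∏ i : Fin n,
          (C (a i) + X 0 * C (w i) + X (1 : Fin 2) : MvPolynomial (Fin 2) R)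
        = ∏ i : Fin n,
          (C (a i) + X 0 * C (w (σ i)) + X (1 : Fin 2) : MvPolynomial (Fin 2) R)) :
    ∀ i, a i = a (σ i) := by
  intro i0
  set j := σ i0 with hj
  set v : Fin 2 → Polynomial R :=
    ![Polynomial.X, Polynomial.C (-(a j)) - Polynomial.X * Polynomial.C (w j)] with hv
  have h2 := congrArg (MvPolynomial.aeval v) h
  rw [map_prod, map_prod] at h2
  have hfac : ∀ c d : R,
      (MvPolynomial.aeval v) (C c + X 0 * C d + X (1 : Fin 2) : MvPolynomial (Fin 2) R)
        = Polynomial.C (c - a j) + Polynomial.X * Polynomial.C (d - w j) := by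
    intro c d
    simp only [map_add, map_mul, aeval_X, aeval_C, hv, Matrix.cons_val_zero,
      Matrix.cons_val_one, Matrix.head_cons, Polynomial.algebraMap_eq, map_sub, map_neg]
    ring
  simp only [hfac] at h2
  have hL : ∏ i : Fin n,
      (Polynomial.C (a i - a j) + Polynomial.X * Polynomial.C (w i - w j)) = 0 := by
    apply Finset.prod_eq_zero (Finset.mem_univ j)
    simp
  rw [hL] at h2
  obtain ⟨i, -, hi⟩ := Finset.prod_eq_zero_iff.mp h2.symm
  have h1 := Polynomial.ext_iff.mp hi 1
  have h0 := Polynomial.ext_iff.mp hi 0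
  simp [Polynomial.coeff_add, Polynomial.coeff_X_mul, sub_eq_zero] at h0 h1
  have : σ i = j := hw h1
  have : i = i0 := σ.injective (by rw [this, hj])
  rw [this] at h0
  exact h0
end
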